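/- If a K-graph D has at least one transversal edge, then there is a semipath a_1,...,a_n of D with n≥2 whose connecting edges are exactly the transversal edges of D; moreover this semipath is unique up to reversal (i.e., any semipath of D whose connecting edges are exactly the transversal edges of D is this semipath or its reversed sequence). -/

import Mathlib

/-! The underlying graph of an asemicyclic, weakly connected digraph is a tree. If the first
and the last connecting edge of a semipath are transversal, then so is every connecting edge in
between: a proper semipath witnessing an end edge can be prefixed by the reversed initial
segment of the semipath up to any of its edges, and by the tree property the result is again a
semipath. So the transversal edges span a subtree, and as no vertex carries three of them it is
a single semipath. Concretely, a longest semipath with transversal connecting edges contains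
every transversal edge: otherwise some transversal edge leaves it at a vertex `w`, and either
`w` is an end and the semipath can be extended, or `w` is inner and we get a transversal
bifurcation. Uniqueness holds because a semipath of a tree is determined by its ends, and the
ends are the vertices incident to exactly one of the connecting edges.
-/

namespace PluralCuts

/-- The two horizontal directions: west and east. -/
inductive XDir : Type
  | W
  | E
deriving DecidableEq

/-- The two vertical directions: north and south. -/
inductive YDir : Type
  | N
  | S
deriving DecidableEq

/-- The other element of `{W, E}`. -/
def XDir.other : XDir → XDir
  | .W => .E
  | .E => .W

/-- A helper choosing between two values according to an `XDir`. -/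
def pick {α : Type*} (w e : α) : XDir → α
  | .W => w
  | .E => e

/-- A digraph on (a finite set of) natural-number vertices: a finite set of
vertices together with a finite set of edges (ordered pairs). -/
structure DG : Type where
  verts : Finset ℕ
  edges : Finset (ℕ × ℕ)

namespace DG

/-- `D` is an oriented graph: edges lie between vertices, the edge relation is
irreflexive and antisymmetric, and the vertex set is nonempty. -/
def IsOriented (D : DG) : Prop :=
  (∀ e ∈ D.edges, e.1 ∈ D.verts ∧ e.2 ∈ D.verts) ∧
  (∀ e ∈ D.edges, e.1 ≠ e.2) ∧
  (∀ a b : ℕ, (a, b) ∈ D.edges → (b, a) ∉ D.edges) ∧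
  D.verts.Nonempty

/-- A `W`-vertex: no edge ends in it. -/
def isWVert (D : DG) (a : ℕ) : Prop := a ∈ D.verts ∧ ∀ b, (b, a) ∉ D.edges

/-- An `E`-vertex: no edge begins in it. -/
def isEVert (D : DG) (a : ℕ) : Prop := a ∈ D.verts ∧ ∀ b, (a, b) ∉ D.edges

/-- An inner vertex: some edge ends in it and some edge begins in it. -/
def isInner (D : DG) (a : ℕ) : Prop :=
  a ∈ D.verts ∧ (∃ b, (b, a) ∈ D.edges) ∧ (∃ b, (a, b) ∈ D.edges)

/-- A `W`-edge: an edge beginning in a `W`-vertex. -/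
def isWEdge (D : DG) (e : ℕ × ℕ) : Prop := e ∈ D.edges ∧ D.isWVert e.1

/-- An `E`-edge: an edge ending in an `E`-vertex. -/
def isEEdge (D : DG) (e : ℕ × ℕ) : Prop := e ∈ D.edges ∧ D.isEVert e.2

/-- An `X`-edge, for `X ∈ {W, E}`. -/
def isXEdge (D : DG) : XDir → (ℕ × ℕ) → Prop
  | .W => D.isWEdge
  | .E => D.isEEdge

/-- An inner edge: it begins and ends in inner vertices. -/
def isInnerEdge (D : DG) (e : ℕ × ℕ) : Prop :=
  e ∈ D.edges ∧ D.isInner e.1 ∧ D.isInner e.2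

/-- A functional `W`-edge `(a,b)`: `(a,c) ∈ D` implies `b = c`. -/
def funcWEdge (D : DG) (e : ℕ × ℕ) : Prop :=
  D.isWEdge e ∧ ∀ c, (e.1, c) ∈ D.edges → c = e.2

/-- A functional `E`-edge `(b,a)`: `(c,a) ∈ D` implies `b = c`. -/
def funcEEdge (D : DG) (e : ℕ × ℕ) : Prop :=
  D.isEEdge e ∧ ∀ c, (c, e.2) ∈ D.edges → c = e.1

/-- `D` is `W`-`E`-functional: all its `W`-edges and `E`-edges are functional. -/
def WEFunctional (D : DG) : Prop :=
  (∀ e, D.isWEdge e → D.funcWEdge e) ∧ (∀ e, D.isEEdge e → D.funcEEdge e)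

/-- Semi-adjacency: `(a,b)` or `(b,a)` is an edge. -/
def semiAdj (D : DG) (a b : ℕ) : Prop := (a, b) ∈ D.edges ∨ (b, a) ∈ D.edges

/-- A semipath: a nonempty sequence of mutually distinct vertices in which any
two consecutive vertices are semi-adjacent. -/
def IsSemipath (D : DG) (l : List ℕ) : Prop :=
  l ≠ [] ∧ (∀ a ∈ l, a ∈ D.verts) ∧ l.Nodup ∧ l.Chain' D.semiAdj

/-- A path: a nonempty sequence of mutually distinct vertices in which
`(a_i, a_{i+1})` is an edge for consecutive vertices. -/
def IsPath (D : DG) (l : List ℕ) : Prop :=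
  l ≠ [] ∧ (∀ a ∈ l, a ∈ D.verts) ∧ l.Nodup ∧
    l.Chain' (fun a b => (a, b) ∈ D.edges)

/-- A semicycle: a sequence `a_1, ..., a_n` of vertices with `n ≥ 4`,
`a_1 = a_n`, `a_1, ..., a_{n-1}` mutually distinct, and consecutive vertices
semi-adjacent. -/
def IsSemicycle (D : DG) (l : List ℕ) : Prop :=
  4 ≤ l.length ∧ (∀ a ∈ l, a ∈ D.verts) ∧ l.head? = l.getLast? ∧
  l.dropLast.Nodup ∧ l.Chain' D.semiAdj

/-- `D` is weakly connected: every two vertices are joined by a semipath. -/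
def WeaklyConnected (D : DG) : Prop :=
  ∀ a ∈ D.verts, ∀ b ∈ D.verts,
    ∃ l, D.IsSemipath l ∧ l.head? = some a ∧ l.getLast? = some b

/-- `D` is asemicyclic: it has no semicycles. -/
def Asemicyclic (D : DG) : Prop := ∀ l, ¬ D.IsSemicycle l

/-- The cut `D_W[e_W - e_E]D_E`:
`(D_W - {e_W}) ∪ (D_E - {e_E}) ∪ {(e_W.1, e_E.2)}` on the union of the vertex
sets with `e_W.2` and `e_E.1` omitted. -/
def cut (DW DE : DG) (eW eE : ℕ × ℕ) : DG where
  verts := (DW.verts ∪ DE.verts) \ {eW.2, eE.1}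
  edges := insert (eW.1, eE.2) ((DW.edges.erase eW) ∪ (DE.edges.erase eE))

end DG

/-- The type of assignments of four distinguished edges `NW, SW, NE, SE`. -/
abbrev DistE : Type := YDir → XDir → ℕ × ℕ

/-- The type of labellings assigning to (inner) vertices four edges. -/
abbrev Lab : Type := ℕ → YDir → XDir → ℕ × ℕ

/-- `⟨D, ε⟩` is a basic K-graph: `D` is an oriented graph with a single inner
vertex `b`, all edges begin or end in `b`, every other vertex is joined to `b`
by an edge, there is at least one edge ending in `b` and one beginning in `b`,
the distinguished edges `ε Y W` end in `b` and `ε Y E` begin in `b`, and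
(XYB): if there are at least two `X`-edges then `NX ≠ SX`. -/
def IsBasicK (D : DG) (ε : DistE) : Prop :=
  D.IsOriented ∧
  ∃ b ∈ D.verts,
    (∀ e ∈ D.edges, e.1 = b ∨ e.2 = b) ∧
    (∀ v ∈ D.verts, v = b ∨ (v, b) ∈ D.edges ∨ (b, v) ∈ D.edges) ∧
    (∃ a, (a, b) ∈ D.edges) ∧ (∃ c, (b, c) ∈ D.edges) ∧
    (∀ Y : YDir, ε Y XDir.W ∈ D.edges ∧ (ε Y XDir.W).2 = b ∧
      ε Y XDir.E ∈ D.edges ∧ (ε Y XDir.E).1 = b) ∧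
    (2 ≤ (D.edges.filter (fun e => e.2 = b)).card →
      ε YDir.N XDir.W ≠ ε YDir.S XDir.W) ∧
    (2 ≤ (D.edges.filter (fun e => e.1 = b)).card →
      ε YDir.N XDir.E ≠ ε YDir.S XDir.E)

/-- `⟨D, ε⟩` is a basic Q-graph: as a basic K-graph but with no requirement
(XYB) on the distinguished edges. -/
def IsBasicQ (D : DG) (ε : DistE) : Prop :=
  D.IsOriented ∧
  ∃ b ∈ D.verts,
    (∀ e ∈ D.edges, e.1 = b ∨ e.2 = b) ∧
    (∀ v ∈ D.verts, v = b ∨ (v, b) ∈ D.edges ∨ (b, v) ∈ D.edges) ∧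
    (∃ a, (a, b) ∈ D.edges) ∧ (∃ c, (b, c) ∈ D.edges) ∧
    (∀ Y : YDir, ε Y XDir.W ∈ D.edges ∧ (ε Y XDir.W).2 = b ∧
      ε Y XDir.E ∈ D.edges ∧ (ε Y XDir.E).1 = b)

/-- Finite binary trees whose nodes carry an oriented graph, four
distinguished edges, and (at internal nodes) the two cut edges. -/
inductive CTree : Type
  | leaf (D : DG) (ε : DistE)
  | node (D : DG) (ε : DistE) (eW eE : ℕ × ℕ) (l r : CTree)

namespace CTree

/-- The graph at the root of the tree. -/
def rootGraph : CTree → DG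
  | .leaf D _ => D
  | .node D _ _ _ _ _ => D

/-- The distinguished edges at the root of the tree. -/
def dist : CTree → DistE
  | .leaf _ ε => ε
  | .node _ ε _ _ _ _ => ε

/-- The list of graphs-with-distinguished-edges at the leaves of the tree
(the basic K-graphs determining the leaves of a construction). -/
def leaves : CTree → List (DG × DistE)
  | .leaf D ε => [(D, ε)]
  | .node _ _ _ _ l r => l.leaves ++ r.leaves

end CTree

/-- The tree `G_W[e_W - e_E]G_E`, whose root graph is the cut of the root
graphs and whose distinguished edges are given by (XYD). -/
def mkNode (GW GE : CTree) (eW eE : ℕ × ℕ) : CTree :=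
  .node (DG.cut GW.rootGraph GE.rootGraph eW eE)
    (fun Y X =>
      match X with
      | .W => if eE = GE.dist Y XDir.W then GW.dist Y XDir.W else GE.dist Y XDir.W
      | .E => if eW = GW.dist Y XDir.E then GE.dist Y XDir.E else GW.dist Y XDir.E)
    eW eE GW GE

/-- The inductive notion of construction (of a global K-graph). -/
inductive IsConstruction : CTree → Prop
  | leaf (D : DG) (ε : DistE) (h : IsBasicK D ε) : IsConstruction (.leaf D ε)
  | node (D : DG) (ε : DistE) (eW eE : ℕ × ℕ) (GW GE : CTree)
      (hW : IsConstruction GW) (hE : IsConstruction GE)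
      (hdisj : Disjoint GW.rootGraph.verts GE.rootGraph.verts)
      (heW : GW.rootGraph.funcEEdge eW)
      (heE : GE.rootGraph.funcWEdge eE)
      (hD : D = DG.cut GW.rootGraph GE.rootGraph eW eE)
      (hXYC : ∀ Y : YDir, eW = GW.dist Y XDir.E ∨ eE = GE.dist Y XDir.W)
      (hεW : ∀ Y : YDir, ε Y XDir.W =
        if eE = GE.dist Y XDir.W then GW.dist Y XDir.W else GE.dist Y XDir.W)
      (hεE : ∀ Y : YDir, ε Y XDir.E =
        if eW = GW.dist Y XDir.E then GE.dist Y XDir.E else GW.dist Y XDir.E) :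
      IsConstruction (.node D ε eW eE GW GE)

/-- The inductive notion of construction of a global Q-graph: as
`IsConstruction` but with basic Q-graphs at the leaves. -/
inductive IsConstructionQ : CTree → Prop
  | leaf (D : DG) (ε : DistE) (h : IsBasicQ D ε) : IsConstructionQ (.leaf D ε)
  | node (D : DG) (ε : DistE) (eW eE : ℕ × ℕ) (GW GE : CTree)
      (hW : IsConstructionQ GW) (hE : IsConstructionQ GE)
      (hdisj : Disjoint GW.rootGraph.verts GE.rootGraph.verts)
      (heW : GW.rootGraph.funcEEdge eW)
      (heE : GE.rootGraph.funcWEdge eE)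
      (hD : D = DG.cut GW.rootGraph GE.rootGraph eW eE)
      (hXYC : ∀ Y : YDir, eW = GW.dist Y XDir.E ∨ eE = GE.dist Y XDir.W)
      (hεW : ∀ Y : YDir, ε Y XDir.W =
        if eE = GE.dist Y XDir.W then GW.dist Y XDir.W else GE.dist Y XDir.W)
      (hεE : ∀ Y : YDir, ε Y XDir.E =
        if eW = GW.dist Y XDir.E then GE.dist Y XDir.E else GW.dist Y XDir.E) :
      IsConstructionQ (.node D ε eW eE GW GE)

/-- ρ-equivalence of constructions: the least equivalence relation containing
ρ1, ρ2, ρ3 and closed under congruence with respect to cuts. -/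
inductive RhoEquiv : CTree → CTree → Prop
  | rho1 (P Q R : CTree) (eW eE fW fE : ℕ × ℕ)
      (hP : IsConstruction P) (hQ : IsConstruction Q) (hR : IsConstruction R)
      (heW : P.rootGraph.isEEdge eW) (hfW : Q.rootGraph.isEEdge fW)
      (heE : Q.rootGraph.isWEdge eE) (hfE : R.rootGraph.isWEdge fE)
      (h1 : IsConstruction (mkNode (mkNode P Q eW eE) R fW fE))
      (h2 : IsConstruction (mkNode P (mkNode Q R fW fE) eW eE)) :
      RhoEquiv (mkNode (mkNode P Q eW eE) R fW fE)
               (mkNode P (mkNode Q R fW fE) eW eE)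
  | rho2 (P Q R : CTree) (eW eE fW fE : ℕ × ℕ)
      (hP : IsConstruction P) (hQ : IsConstruction Q) (hR : IsConstruction R)
      (heW : P.rootGraph.isEEdge eW) (hfW : P.rootGraph.isEEdge fW)
      (hne : eW ≠ fW)
      (heE : Q.rootGraph.isWEdge eE) (hfE : R.rootGraph.isWEdge fE)
      (h1 : IsConstruction (mkNode (mkNode P Q eW eE) R fW fE))
      (h2 : IsConstruction (mkNode (mkNode P R fW fE) Q eW eE)) :
      RhoEquiv (mkNode (mkNode P Q eW eE) R fW fE)
               (mkNode (mkNode P R fW fE) Q eW eE)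
  | rho3 (P Q R : CTree) (eW eE fW fE : ℕ × ℕ)
      (hP : IsConstruction P) (hQ : IsConstruction Q) (hR : IsConstruction R)
      (heE : P.rootGraph.isWEdge eE) (hfE : P.rootGraph.isWEdge fE)
      (hne : eE ≠ fE)
      (heW : Q.rootGraph.isEEdge eW) (hfW : R.rootGraph.isEEdge fW)
      (h1 : IsConstruction (mkNode R (mkNode Q P eW eE) fW fE))
      (h2 : IsConstruction (mkNode Q (mkNode R P fW fE) eW eE)) :
      RhoEquiv (mkNode R (mkNode Q P eW eE) fW fE)
               (mkNode Q (mkNode R P fW fE) eW eE)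
  | congr (G1 G2 H1 H2 : CTree) (eW eE : ℕ × ℕ)
      (h12 : RhoEquiv G1 G2) (h34 : RhoEquiv H1 H2)
      (hc1 : IsConstruction (mkNode G1 H1 eW eE))
      (hc2 : IsConstruction (mkNode G2 H2 eW eE)) :
      RhoEquiv (mkNode G1 H1 eW eE) (mkNode G2 H2 eW eE)
  | refl (G : CTree) (h : IsConstruction G) : RhoEquiv G G
  | symm {G H : CTree} (h : RhoEquiv G H) : RhoEquiv H G
  | trans {G H K : CTree} (h1 : RhoEquiv G H) (h2 : RhoEquiv H K) :
      RhoEquiv G K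

/-- The class `[G]`: all constructions with the same root graph as `G` whose
leaves are determined by the same basic K-graphs as those of `G`. -/
def classOf (G : CTree) : Set CTree :=
  {H | IsConstruction H ∧ H.rootGraph = G.rootGraph ∧
    ∀ p : DG × DistE, p ∈ H.leaves ↔ p ∈ G.leaves}

/-- Renaming the vertices of a digraph along a function. -/
def DG.rename (f : ℕ → ℕ) (D : DG) : DG where
  verts := D.verts.image f
  edges := D.edges.image (fun e => (f e.1, f e.2))

/-- Renaming the vertices throughout a tree. -/
def CTree.rename (f : ℕ → ℕ) : CTree → CTree
  | .leaf D ε => .leaf (DG.rename f D) (fun Y X => (f (ε Y X).1, f (ε Y X).2))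
  | .node D ε eW eE l r =>
      .node (DG.rename f D) (fun Y X => (f (ε Y X).1, f (ε Y X).2))
        (f eW.1, f eW.2) (f eE.1, f eE.2) (l.rename f) (r.rename f)

/-- σ-equivalence: `H` is obtained from `G` by a bijective renaming of
vertices that fixes the root vertices (so only secondary vertices may be
renamed). -/
def SigmaEquiv (G H : CTree) : Prop :=
  ∃ f : ℕ ≃ ℕ, (∀ v ∈ G.rootGraph.verts, f v = v) ∧ H = G.rename f

/-- The global compass graph `‖G‖`: all constructions σ-equivalent to a
construction in `[G]`. -/
def normClass (G : CTree) : Set CTree :=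
  {H | ∃ K ∈ classOf G, SigmaEquiv K H}

/-- The labelling `L` of `λ(G) = ⟨D, L⟩`, defined by induction on `G`: at a
leaf given by a basic K-graph with inner vertex `b`, `YX(b) = YX(B)`; at a
node, the value is inherited from the appropriate subtree unless it is one of
the two cut edges, in which case it is the new edge introduced by the cut. -/
def lamG : CTree → Lab
  | .leaf _ ε => fun _ => ε
  | .node _ _ eW eE l r => fun a Y X =>
      let v := if a ∈ l.rootGraph.verts then lamG l a Y X else lamG r a Y X
      if v = eW ∨ v = eE then (eW.1, eE.2) else v

/-- `L` assigns to every inner vertex `a` edges `L a Y W` ending in `a` and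
edges `L a Y E` beginning in `a`. -/
def ProperLab (D : DG) (L : Lab) : Prop :=
  ∀ a, D.isInner a → ∀ Y : YDir,
    L a Y XDir.W ∈ D.edges ∧ (L a Y XDir.W).2 = a ∧
    L a Y XDir.E ∈ D.edges ∧ (L a Y XDir.E).1 = a

/-- `⟨D, L⟩` separates `N` from `S`. -/
def SeparatesNS (D : DG) (L : Lab) : Prop :=
  ∀ a, D.isInner a →
    (2 ≤ (D.edges.filter (fun e => e.2 = a)).card →
      L a YDir.N XDir.W ≠ L a YDir.S XDir.W) ∧
    (2 ≤ (D.edges.filter (fun e => e.1 = a)).card →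
      L a YDir.N XDir.E ≠ L a YDir.S XDir.E)

/-- A list `a_1, ..., a_n` is `Y`-decent in `⟨D, L⟩`: `n = 1`, or
`YE(a_1) = (a_1, a_2)`, or `YW(a_n) = (a_{n-1}, a_n)`. -/
def Ydecent (L : Lab) (Y : YDir) (l : List ℕ) : Prop :=
  ∀ a b t, l = a :: b :: t →
    (L a Y XDir.E = (a, b) ∨
      ∃ c d t', l.reverse = d :: c :: t' ∧ L d Y XDir.W = (c, d))

/-- `⟨D, L⟩` is a local compass graph. -/
def IsLocalCompass (D : DG) (L : Lab) : Prop :=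
  D.IsOriented ∧ ProperLab D L ∧
  D.WeaklyConnected ∧ D.Asemicyclic ∧ D.WEFunctional ∧ (∃ a, D.isInner a) ∧
  SeparatesNS D L ∧
  (∀ l, D.IsPath l → Ydecent L YDir.N l ∧ Ydecent L YDir.S l)

/-- A path (list) covers an edge `g` when `g` is a pair of consecutive
vertices of the list. -/
def covers (l : List ℕ) (g : ℕ × ℕ) : Prop := g ∈ l.zip l.tail

/-- A `YX`-edge in `⟨D, L⟩`. -/
def YXedge (D : DG) (L : Lab) (Y : YDir) : XDir → (ℕ × ℕ) → Prop
  | .W, g => g ∈ D.edges ∧ (L g.2 Y XDir.W = g ∨ D.isEEdge g)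
  | .E, g => g ∈ D.edges ∧ (L g.1 Y XDir.E = g ∨ D.isWEdge g)

/-- A proper semipath: a semipath such that neither it nor its reverse is a
path. -/
def ProperSemipath (D : DG) (l : List ℕ) : Prop :=
  D.IsSemipath l ∧ ¬ D.IsPath l ∧ ¬ D.IsPath l.reverse

/-- A transversal edge `(a,b)`: there is a proper semipath beginning with
`a, b` and a proper semipath beginning with `b, a`. -/
def Transversal (D : DG) (e : ℕ × ℕ) : Prop :=
  e ∈ D.edges ∧
  (∃ t, ProperSemipath D (e.1 :: e.2 :: t)) ∧
  (∃ t, ProperSemipath D (e.2 :: e.1 :: t))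

/-- The edge of `D` that connects two semi-adjacent vertices `a` and `b`. -/
def connEdge (D : DG) (a b : ℕ) : ℕ × ℕ :=
  if (a, b) ∈ D.edges then (a, b) else (b, a)

/-- The connecting edges of a list: the edges connecting its consecutive
vertices. -/
def connEdges (D : DG) (l : List ℕ) (e : ℕ × ℕ) : Prop :=
  ∃ p ∈ l.zip l.tail, e = connEdge D p.1 p.2

/-- A bifurcation: three distinct edges with a common vertex. -/
def Bifurcation (D : DG) (e1 e2 e3 : ℕ × ℕ) : Prop :=
  e1 ∈ D.edges ∧ e2 ∈ D.edges ∧ e3 ∈ D.edges ∧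
  e1 ≠ e2 ∧ e1 ≠ e3 ∧ e2 ≠ e3 ∧
  ∃ v, (v = e1.1 ∨ v = e1.2) ∧ (v = e2.1 ∨ v = e2.2) ∧ (v = e3.1 ∨ v = e3.2)

/-- A K-graph: a weakly connected, asemicyclic, `W`-`E`-functional oriented
graph with an inner vertex in which no bifurcation is transversal. -/
def IsKGraph (D : DG) : Prop :=
  D.IsOriented ∧ D.WeaklyConnected ∧ D.Asemicyclic ∧ D.WEFunctional ∧
  (∃ a, D.isInner a) ∧
  ∀ e1 e2 e3, Bifurcation D e1 e2 e3 →
    ¬ (Transversal D e1 ∧ Transversal D e2 ∧ Transversal D e3)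

/-- A Q-graph: a weakly connected, asemicyclic, `W`-`E`-functional oriented
graph with an inner vertex. -/
def IsQGraph (D : DG) : Prop :=
  D.IsOriented ∧ D.WeaklyConnected ∧ D.Asemicyclic ∧ D.WEFunctional ∧
  ∃ a, D.isInner a

open List

theorem exists_eq_append_cons_of_exists_mem {α : Type*} {p : α → Prop} [DecidablePred p]
    {l : List α} (h : ∃ v ∈ l, p v) : ∃ m w r, l = m ++ w :: r ∧ p w ∧ ∀ x ∈ m, ¬ p x := by
  obtain ⟨w, hw⟩ := Option.isSome_iff_exists.mp
    (List.find?_isSome (p := fun x => decide (p x)) (xs := l) |>.mpr (by simpa using h))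
  obtain ⟨hpw, m, r, rfl, hm⟩ := List.find?_eq_some_iff_append.mp hw
  exact ⟨m, w, r, rfl, by simpa using hpw, fun x hx => by simpa using hm x hx⟩

theorem mem_zip_tail_iff {α : Type*} {l : List α} {a b : α} :
    (a, b) ∈ l.zip l.tail ↔ ∃ s r, l = s ++ a :: b :: r := by
  induction l with
  | nil => simp
  | cons c t ih =>
    cases t with
    | nil =>
      simp only [tail_cons, zip_nil_right, not_mem_nil, false_iff, not_exists]
      intro s r h
      have := congrArg length h
      simp at this
      omega
    | cons d r =>
      rw [tail_cons, zip_cons_cons, mem_cons, Prod.mk.injEq,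
        show (a, b) ∈ (d :: r).zip r ↔ _ from ih]
      constructor
      · rintro (⟨rfl, rfl⟩ | ⟨s, r', h⟩)
        · exact ⟨[], r, rfl⟩
        · exact ⟨c :: s, r', by simp [h]⟩
      · rintro ⟨_ | ⟨c', s⟩, r', h⟩
        · simp only [nil_append, cons.injEq] at h
          exact Or.inl ⟨h.1.symm, h.2.1.symm⟩
        · simp only [cons_append, cons.injEq] at h
          exact Or.inr ⟨s, r', h.2⟩

theorem exists_append_cons_cons_eq_of_eq {α : Type*} {s r t : List α} {p q x y : α}
    (h : s ++ p :: q :: r = x :: y :: t) : ∃ m, s ++ [p, q] = x :: y :: m ∧ t = m ++ r := by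
  rcases s with _ | ⟨c, _ | ⟨d, s⟩⟩
  · simp only [nil_append, cons.injEq] at h
    exact ⟨[], by simp [h.1, h.2.1], by simp [h.2.2]⟩
  · simp only [cons_append, nil_append, cons.injEq] at h
    exact ⟨[q], by simp [h.1, h.2.1], by simp [h.2.2]⟩
  · simp only [cons_append, cons.injEq] at h
    exact ⟨s ++ [p, q], by simp [h.1, h.2.1], by simp [← h.2.2]⟩

theorem exists_eq_cons_append_cons_cons {α : Type*} {S : α → Prop} {x : α} {P : List α}
    (hx : ¬ S x) (h : ∃ v ∈ P, S v) : ∃ s u w r, x :: P = s ++ u :: w :: r ∧ ¬ S u ∧ S w := by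
  induction P generalizing x with
  | nil => simp at h
  | cons y P ih =>
    by_cases hy : S y
    · exact ⟨[], x, y, P, rfl, hx, hy⟩
    · obtain ⟨v, hv, hSv⟩ := h
      have hvP : v ∈ P := (mem_cons.mp hv).resolve_left (by rintro rfl; exact hy hSv)
      obtain ⟨s, u, w, r, hsr, hu, hw⟩ := ih hy ⟨v, hvP, hSv⟩
      exact ⟨x :: s, u, w, r, by simp [hsr], hu, hw⟩

theorem exists_eq_append_cons_cons_cons_of_mem {α : Type*} {l : List α} {v : α} (hv : v ∈ l)
    (hh : l.head? ≠ some v) (hl : l.getLast? ≠ some v) :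
    ∃ s a b r, l = s ++ a :: v :: b :: r := by
  obtain ⟨s, r, rfl⟩ := append_of_mem hv
  obtain rfl | ⟨s, a, rfl⟩ := eq_nil_or_concat s
  · simp at hh
  obtain _ | ⟨b, r⟩ := r
  · simp at hl
  · exact ⟨s, a, b, r, by simp⟩

theorem exists_eq_cons_cons_of_two_le_length {α : Type*} {l : List α} (h : 2 ≤ l.length) :
    ∃ a b t, l = a :: b :: t := by
  match l, h with
  | a :: b :: t, _ => exact ⟨a, b, t, rfl⟩

variable {D : DG}

theorem DG.semiAdj_comm {a b : ℕ} : D.semiAdj a b ↔ D.semiAdj b a := or_comm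

theorem DG.IsOriented.ne_of_semiAdj (hor : D.IsOriented) {a b : ℕ} (h : D.semiAdj a b) :
    a ≠ b := by
  rcases h with h | h
  · exact hor.2.1 _ h
  · exact (hor.2.1 _ h).symm

theorem DG.IsOriented.mem_verts_of_semiAdj (hor : D.IsOriented) {a b : ℕ} (h : D.semiAdj a b) :
    a ∈ D.verts := by
  rcases h with h | h
  · exact (hor.1 _ h).1
  · exact (hor.1 _ h).2

theorem DG.IsSemipath.reverse {l : List ℕ} (h : D.IsSemipath l) : D.IsSemipath l.reverse :=
  ⟨by simpa using h.1, fun a ha => h.2.1 a (mem_reverse.mp ha), nodup_reverse.mpr h.2.2.1,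
    isChain_reverse.mpr (h.2.2.2.imp fun _ _ => semiAdj_comm.mp)⟩

theorem DG.IsSemipath.infix {l l' : List ℕ} (h : D.IsSemipath l) (hi : l' <:+: l)
    (hne : l' ≠ []) : D.IsSemipath l' :=
  ⟨hne, fun a ha => h.2.1 a (hi.subset ha), h.2.2.1.sublist hi.sublist, h.2.2.2.infix hi⟩

theorem DG.IsSemipath.append {l₁ l₂ : List ℕ} (h₁ : D.IsSemipath l₁) (h₂ : D.IsSemipath l₂)
    (hdisj : l₁.Disjoint l₂) (hadj : ∀ a ∈ l₁.getLast?, ∀ b ∈ l₂.head?, D.semiAdj a b) :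
    D.IsSemipath (l₁ ++ l₂) :=
  ⟨by simp [h₁.1], by simpa [or_imp, forall_and] using ⟨h₁.2.1, h₂.2.1⟩,
    nodup_append.mpr ⟨h₁.2.2.1, h₂.2.2.1, fun _ ha _ hb hab => hdisj ha (hab ▸ hb)⟩,
    isChain_append.mpr ⟨h₁.2.2.2, h₂.2.2.2, hadj⟩⟩

theorem DG.IsSemipath.cons {l : List ℕ} {a b : ℕ} (hor : D.IsOriented) (h : D.IsSemipath l)
    (hb : l.head? = some b) (hab : D.semiAdj a b) (ha : a ∉ l) : D.IsSemipath (a :: l) :=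
  (DG.IsSemipath.append (l₁ := [a]) ⟨by simp, by simpa using hor.mem_verts_of_semiAdj hab,
    nodup_singleton a, isChain_singleton a⟩ h (by simpa using ha) (by simpa [hb] using hab))

theorem DG.IsSemipath.length_le_card {l : List ℕ} (h : D.IsSemipath l) :
    l.length ≤ D.verts.card := by
  rw [← toFinset_card_of_nodup h.2.2.1]
  exact Finset.card_le_card fun v hv => h.2.1 v (mem_toFinset.mp hv)

theorem connEdge_eq_or (D : DG) (a b : ℕ) :
    connEdge D a b = (a, b) ∨ connEdge D a b = (b, a) := by
  unfold connEdge; split <;> simp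

theorem connEdge_of_mem {a b : ℕ} (h : (a, b) ∈ D.edges) : connEdge D a b = (a, b) :=
  if_pos h

theorem connEdge_mem {a b : ℕ} (h : D.semiAdj a b) : connEdge D a b ∈ D.edges := by
  unfold connEdge; split
  · assumption
  · exact h.resolve_left ‹_›

theorem DG.IsOriented.connEdge_comm (hor : D.IsOriented) {a b : ℕ}
    (h : D.semiAdj a b) : connEdge D a b = connEdge D b a := by
  rcases h with h | h
  · rw [connEdge_of_mem h, connEdge, if_neg (hor.2.2.1 _ _ h)]
  · rw [connEdge_of_mem h, connEdge, if_neg (hor.2.2.1 _ _ h)]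

theorem DG.IsOriented.connEdge_snd_fst (hor : D.IsOriented) {e : ℕ × ℕ}
    (he : e ∈ D.edges) : connEdge D e.2 e.1 = e := by
  rw [← hor.connEdge_comm (Or.inl he), connEdge_of_mem he]

theorem eq_or_eq_of_connEdge_eq {a b c d : ℕ} (h : connEdge D a b = connEdge D c d) :
    a = c ∨ a = d := by
  rcases connEdge_eq_or D a b with h₁ | h₁ <;> rcases connEdge_eq_or D c d with h₂ | h₂ <;>
    simp only [h₁, h₂, Prod.mk.injEq] at h <;> tauto

theorem left_eq_or_of_connEdge (D : DG) (a b : ℕ) :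
    a = (connEdge D a b).1 ∨ a = (connEdge D a b).2 := by
  rcases connEdge_eq_or D a b with h | h <;> simp [h]

theorem right_eq_or_of_connEdge (D : DG) (a b : ℕ) :
    b = (connEdge D a b).1 ∨ b = (connEdge D a b).2 := by
  rcases connEdge_eq_or D a b with h | h <;> simp [h]

theorem connEdges_iff {l : List ℕ} {e : ℕ × ℕ} :
    connEdges D l e ↔ ∃ s a b r, l = s ++ a :: b :: r ∧ e = connEdge D a b := by
  simp only [connEdges, Prod.exists, mem_zip_tail_iff]
  constructor
  · rintro ⟨a, b, ⟨s, r, hl⟩, he⟩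
    exact ⟨s, a, b, r, hl, he⟩
  · rintro ⟨s, a, b, r, hl, he⟩
    exact ⟨a, b, ⟨s, r, hl⟩, he⟩

theorem connEdges_append_cons_cons (D : DG) (s r : List ℕ) (a b : ℕ) :
    connEdges D (s ++ a :: b :: r) (connEdge D a b) :=
  connEdges_iff.mpr ⟨s, a, b, r, rfl, rfl⟩

theorem connEdges_cons_cons {a b : ℕ} {t : List ℕ} {e : ℕ × ℕ} :
    connEdges D (a :: b :: t) e ↔ e = connEdge D a b ∨ connEdges D (b :: t) e := by
  simp [connEdges]

theorem not_connEdges_singleton {a : ℕ} {e : ℕ × ℕ} : ¬ connEdges D [a] e := by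
  simp [connEdges]

theorem connEdges.mem {l : List ℕ} {e : ℕ × ℕ} (he : connEdges D l e) {v : ℕ}
    (hv : v = e.1 ∨ v = e.2) : v ∈ l := by
  obtain ⟨s, a, b, r, rfl, rfl⟩ := connEdges_iff.mp he
  rcases connEdge_eq_or D a b with h | h <;> rw [h] at hv <;> rcases hv with rfl | rfl <;> simp

theorem connEdges.two_le_length {l : List ℕ} {e : ℕ × ℕ} (he : connEdges D l e) :
    2 ≤ l.length := by
  obtain ⟨s, a, b, r, rfl, -⟩ := connEdges_iff.mp he
  simp only [length_append, length_cons]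
  omega

theorem DG.IsSemipath.semiAdj_of_eq_append {l s r : List ℕ} {a b : ℕ}
    (hl : D.IsSemipath l) (h : l = s ++ a :: b :: r) : D.semiAdj a b :=
  isChain_iff_forall_rel_of_append_cons_cons.mp hl.2.2.2 h

theorem DG.IsSemipath.mem_edges_of_connEdges {l : List ℕ} {e : ℕ × ℕ}
    (hl : D.IsSemipath l) (he : connEdges D l e) : e ∈ D.edges := by
  obtain ⟨s, a, b, r, hs, rfl⟩ := connEdges_iff.mp he
  exact connEdge_mem (hl.semiAdj_of_eq_append hs)

theorem DG.IsSemipath.connEdges_reverse (hor : D.IsOriented) {l : List ℕ}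
    (hl : D.IsSemipath l) {e : ℕ × ℕ} : connEdges D l.reverse e ↔ connEdges D l e := by
  suffices ∀ {l}, D.IsSemipath l → connEdges D l e → connEdges D l.reverse e from
    ⟨fun h => by simpa using this hl.reverse h, this hl⟩
  intro l hl he
  obtain ⟨s, a, b, r, rfl, rfl⟩ := connEdges_iff.mp he
  rw [hor.connEdge_comm (hl.semiAdj_of_eq_append rfl)]
  simpa using connEdges_append_cons_cons D r.reverse s.reverse b a

theorem DG.Asemicyclic.not_semiAdj_getLast_head (hac : D.Asemicyclic) {l : List ℕ}
    (hl : D.IsSemipath l) (hlen : 3 ≤ l.length) {x y : ℕ} (hx : l.head? = some x)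
    (hy : l.getLast? = some y) : ¬ D.semiAdj y x := by
  intro hyx
  obtain ⟨l', rfl⟩ : ∃ l', l = x :: l' := by
    cases l with
    | nil => cases hx
    | cons a l' => exact ⟨l', by simpa using hx⟩
  refine hac (x :: l' ++ [x]) ⟨by simp at hlen ⊢; omega, ?_, by rw [getLast?_concat]; rfl, ?_, ?_⟩
  · intro a ha
    rcases mem_append.mp ha with ha | ha
    · exact hl.2.1 a ha
    · exact (mem_singleton.mp ha) ▸ hl.2.1 x mem_cons_self
  · simpa only [dropLast_concat] using hl.2.2.1
  · exact isChain_append.mpr ⟨hl.2.2.2, isChain_singleton x, by simpa [hy] using hyx⟩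

theorem DG.Asemicyclic.eq_cons_of_semiAdj (hac : D.Asemicyclic) {s t : List ℕ} {x y : ℕ}
    (hl : D.IsSemipath (s ++ x :: t)) (hy : y ∈ t) (hxy : D.semiAdj x y) :
    ∃ r, t = y :: r := by
  obtain ⟨t₁, t₂, rfl⟩ := append_of_mem hy
  cases t₁ with
  | nil => exact ⟨t₂, rfl⟩
  | cons c t₁ =>
    have hsub : D.IsSemipath (x :: c :: t₁ ++ [y]) := hl.infix ⟨s, t₂, by simp⟩ (by simp)
    exact absurd (DG.semiAdj_comm.mp hxy)
      (hac.not_semiAdj_getLast_head hsub (by simp) rfl getLast?_concat)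

theorem DG.Asemicyclic.disjoint_of_head?_ne (hac : D.Asemicyclic) {x : ℕ} {s t : List ℕ}
    (hs : D.IsSemipath (x :: s)) (ht : D.IsSemipath (x :: t)) (hst : s.head? ≠ t.head?) :
    s.Disjoint t := by
  classical
  intro v hvs hvt
  obtain ⟨m, w, m', rfl, hwt, hm⟩ :=
    exists_eq_append_cons_of_exists_mem (p := (· ∈ t)) ⟨v, hvs, hvt⟩
  obtain ⟨q, q', rfl⟩ := append_of_mem hwt
  -- `w` is the first vertex of `s` on `t`; then `x, …, w, …, (head of t)` closes a semicycle
  obtain ⟨b, hb⟩ : ∃ b, (q ++ [w]).head? = some b := by cases q <;> simp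
  have hbt : (q ++ w :: q').head? = some b := by cases q <;> simpa using hb
  have hC : D.IsSemipath ((x :: m) ++ (q ++ [w]).reverse) := by
    refine DG.IsSemipath.append (hs.infix ⟨[], w :: m', by simp⟩ (by simp))
      (ht.infix ⟨[x], q', by simp⟩ (by simp)).reverse ?_ ?_
    · intro a ha hb'
      have hat : a ∈ q ++ w :: q' := by simp at hb' ⊢; tauto
      rcases mem_cons.mp ha with rfl | ha
      · exact (nodup_cons.mp ht.2.2.1).1 hat
      · exact hm a ha hat
    · intro c hc w' hw'
      have hw : w' = w := by simpa [eq_comm] using hw'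
      have hchain : ((x :: m) ++ w :: m').IsChain D.semiAdj := hs.2.2.2
      exact hw ▸ (isChain_append.mp hchain).2.2 c hc w rfl
  have hlen : 3 ≤ ((x :: m) ++ (q ++ [w]).reverse).length := by
    rcases m with _ | ⟨c, m⟩
    · rcases q with _ | ⟨c, q⟩
      · exact absurd (by simp) hst
      · simp
    · simp; omega
  exact hac.not_semiAdj_getLast_head hC hlen (by simp)
    (by rw [getLast?_append, getLast?_reverse, hb]; rfl)
    (DG.semiAdj_comm.mp ((isChain_cons.mp ht.2.2.2).1 b hbt))

theorem DG.Asemicyclic.eq_of_head?_eq_of_getLast?_eq (hac : D.Asemicyclic) {p q : List ℕ}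
    (hp : D.IsSemipath p) (hq : D.IsSemipath q) (hh : p.head? = q.head?)
    (hl : p.getLast? = q.getLast?) : p = q := by
  induction p generalizing q with
  | nil => exact absurd rfl hp.1
  | cons x p ih =>
    obtain ⟨q, rfl⟩ : ∃ q', q = x :: q' := by
      cases q with
      | nil => exact absurd rfl hq.1
      | cons z q' => exact ⟨q', by simp_all⟩
    rcases p with _ | ⟨y, p⟩ <;> rcases q with _ | ⟨z, q⟩
    · rfl
    · exact absurd (mem_of_getLast? (l := z :: q) (by simpa using hl.symm))
        (nodup_cons.mp hq.2.2.1).1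
    · exact absurd (mem_of_getLast? (l := y :: p) (by simpa using hl)) (nodup_cons.mp hp.2.2.1).1
    · obtain ⟨w, hw⟩ : ∃ w, (y :: p).getLast? = some w := ⟨_, getLast?_eq_some_getLast (by simp)⟩
      by_cases hyz : y = z
      · subst hyz
        rw [ih (hp.infix (suffix_cons x _).isInfix (by simp))
          (hq.infix (suffix_cons x _).isInfix (by simp)) rfl (by simpa using hl)]
      · exact absurd (mem_of_getLast? (by simpa [hw] using hl.symm))
          (hac.disjoint_of_head?_ne hp hq (by simpa using hyz) (mem_of_getLast? hw))

theorem DG.Asemicyclic.connEdges_of_semiAdj (hor : D.IsOriented)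
    (hac : D.Asemicyclic) {l : List ℕ} (hl : D.IsSemipath l) {x y : ℕ} (hx : x ∈ l)
    (hy : y ∈ l) (hxy : D.semiAdj x y) : connEdges D l (connEdge D x y) := by
  obtain ⟨s, t, rfl⟩ := append_of_mem hx
  rcases mem_append.mp hy with hy | hy
  · obtain ⟨s₁, s₂, rfl⟩ := append_of_mem hy
    have hl' : D.IsSemipath (s₁ ++ y :: (s₂ ++ x :: t)) := by simpa using hl
    obtain ⟨r, hr⟩ := hac.eq_cons_of_semiAdj hl' (by simp) (DG.semiAdj_comm.mp hxy)
    rw [hor.connEdge_comm hxy]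
    simpa [hr] using connEdges_append_cons_cons D s₁ r y x
  · rcases mem_cons.mp hy with rfl | hy
    · exact absurd rfl (hor.ne_of_semiAdj hxy)
    · obtain ⟨r, rfl⟩ := hac.eq_cons_of_semiAdj hl hy hxy
      exact connEdges_append_cons_cons D s r x y

theorem ProperSemipath.of_suffix {W l : List ℕ} (hW : ProperSemipath D W)
    (hl : D.IsSemipath l) (h : W <:+ l) : ProperSemipath D l :=
  ⟨hl, fun hp => hW.2.1 ⟨hW.1.1, hW.1.2.1, hW.1.2.2.1, hp.2.2.2.suffix h⟩,
    fun hp => hW.2.2 ⟨hW.1.reverse.1, hW.1.reverse.2.1, hW.1.reverse.2.2.1,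
      hp.2.2.2.prefix (reverse_prefix.mpr h)⟩⟩

theorem transversal_connEdge_iff {a b : ℕ} (hab : D.semiAdj a b) :
    Transversal D (connEdge D a b) ↔
      (∃ t, ProperSemipath D (a :: b :: t)) ∧ ∃ t, ProperSemipath D (b :: a :: t) := by
  have hmem := connEdge_mem hab
  unfold Transversal
  rcases connEdge_eq_or D a b with h | h <;> rw [h] at hmem ⊢
  · simp [hmem]
  · simp [hmem, and_comm]

def IsFirstConnEdge (D : DG) (l : List ℕ) (e : ℕ × ℕ) : Prop :=
  ∃ a b t, l = a :: b :: t ∧ connEdge D a b = e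

theorem IsFirstConnEdge.append {l : List ℕ} {e : ℕ × ℕ} (h : IsFirstConnEdge D l e)
    (m : List ℕ) : IsFirstConnEdge D (l ++ m) e := by
  obtain ⟨a, b, t, rfl, he⟩ := h
  exact ⟨a, b, t ++ m, by simp, he⟩

/-- A proper semipath `y, x, …` (which exists as the first edge `(x, y)` of `P` is transversal)
stays proper when extended backwards along `P` to `q, p, …, y, x, …`; the tree property keeps
it a semipath. -/
theorem exists_properSemipath_of_isFirstConnEdge (hac : D.Asemicyclic) {P : List ℕ}
    {f : ℕ × ℕ} (hP : D.IsSemipath P) (hf : IsFirstConnEdge D P f) (hft : Transversal D f)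
    {s r : List ℕ} {p q : ℕ} (hdec : P = s ++ p :: q :: r) :
    ∃ u, ProperSemipath D (q :: p :: u) := by
  obtain ⟨x, y, t, rfl, rfl⟩ := hf
  obtain ⟨-, w, hW⟩ := (transversal_connEdge_iff (hP.semiAdj_of_eq_append (s := []) rfl)).mp hft
  obtain ⟨m, hm, rfl⟩ := exists_append_cons_cons_eq_of_eq hdec.symm
  have hxt : x ∉ m ++ r := (nodup_cons.mp hP.2.2.1).1 ∘ mem_cons_of_mem y
  have hdisj : (x :: w).Disjoint (m ++ r) := by
    refine hac.disjoint_of_head?_ne hW.1 (hP.infix (suffix_cons x _).isInfix (by simp)) ?_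
    intro h
    exact hxt (mem_of_mem_head? (h ▸ rfl : x ∈ (m ++ r).head?))
  have hS : D.IsSemipath ((y :: m).reverse ++ x :: w) := by
    refine DG.IsSemipath.append (hP.infix ⟨[x], r, by simp⟩ (by simp)).reverse
      (hW.1.infix (suffix_cons y _).isInfix (by simp)) ?_ ?_
    · intro a ha hax
      rcases mem_cons.mp (mem_reverse.mp ha) with rfl | ha
      · exact (nodup_cons.mp hW.1.2.2.1).1 hax
      · exact hdisj hax (mem_append_left r ha)
    · simpa using (isChain_cons_cons.mp hW.1.2.2.2).1
  have hSeq : (y :: m).reverse ++ x :: w = q :: p :: (s.reverse ++ w) := by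
    calc (y :: m).reverse ++ x :: w = (x :: y :: m).reverse ++ w := by simp
      _ = (s ++ [p, q]).reverse ++ w := by rw [hm]
      _ = q :: p :: (s.reverse ++ w) := by simp
  exact ⟨s.reverse ++ w, hSeq ▸ hW.of_suffix hS ⟨m.reverse, by simp⟩⟩

theorem transversal_of_connEdges (hac : D.Asemicyclic)
    {P : List ℕ} {e f g : ℕ × ℕ} (hP : D.IsSemipath P) (hf : IsFirstConnEdge D P f)
    (he : IsFirstConnEdge D P.reverse e) (hft : Transversal D f) (het : Transversal D e)
    (hg : connEdges D P g) : Transversal D g := by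
  obtain ⟨s, p, q, r, hdec, rfl⟩ := connEdges_iff.mp hg
  rw [transversal_connEdge_iff (hP.semiAdj_of_eq_append hdec)]
  exact ⟨exists_properSemipath_of_isFirstConnEdge hac hP.reverse he het
      (by simp [hdec] : P.reverse = r.reverse ++ q :: p :: s.reverse),
    exists_properSemipath_of_isFirstConnEdge hac hP hf hft hdec⟩

theorem exists_isFirstConnEdge_of_semiAdj (hor : D.IsOriented) (hac : D.Asemicyclic)
    {a b : ℕ} {p : List ℕ} (hp : D.IsSemipath (a :: p)) (hab : D.semiAdj a b) :
    ∃ q, D.IsSemipath q ∧ IsFirstConnEdge D q (connEdge D a b) ∧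
      (q = a :: p ∨ q = b :: a :: p) := by
  by_cases hb : b ∈ p
  · obtain ⟨r, rfl⟩ := hac.eq_cons_of_semiAdj (s := []) hp hb hab
    exact ⟨_, hp, ⟨a, b, r, rfl, rfl⟩, Or.inl rfl⟩
  · refine ⟨b :: a :: p, hp.cons hor rfl (DG.semiAdj_comm.mp hab) ?_,
      ⟨b, a, p, rfl, (hor.connEdge_comm hab).symm⟩, Or.inr rfl⟩
    simp [hb, (hor.ne_of_semiAdj hab).symm]

theorem exists_semipath_isFirstConnEdge (hor : D.IsOriented) (hac : D.Asemicyclic)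
    (hconn : D.WeaklyConnected) {e f : ℕ × ℕ} (he : e ∈ D.edges) (hf : f ∈ D.edges) :
    ∃ P, D.IsSemipath P ∧ IsFirstConnEdge D P f ∧ IsFirstConnEdge D P.reverse e := by
  obtain ⟨p, hp, hph, hpl⟩ := hconn f.1 (hor.1 f hf).1 e.1 (hor.1 e he).1
  obtain ⟨p, rfl⟩ : ∃ p', p = f.1 :: p' := by
    cases p with
    | nil => cases hph
    | cons a p' => exact ⟨p', by simp_all⟩
  obtain ⟨q, hq, hqf, hqp⟩ := exists_isFirstConnEdge_of_semiAdj hor hac hp (Or.inl hf)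
  rw [connEdge_of_mem hf] at hqf
  obtain ⟨q', hq'⟩ : ∃ q', q.reverse = e.1 :: q' := by
    have hql : q.reverse.head? = some e.1 := by
      rw [head?_reverse]
      rcases hqp with rfl | rfl
      · exact hpl
      · rwa [getLast?_cons_cons]
    cases hqr : q.reverse with
    | nil => simp [hqr] at hql
    | cons c q' => exact ⟨q', by simp_all⟩
  obtain ⟨P, hP, hPe, hPq⟩ :=
    exists_isFirstConnEdge_of_semiAdj hor hac (hq' ▸ hq.reverse) (Or.inl he)
  rw [connEdge_of_mem he] at hPe
  refine ⟨P.reverse, hP.reverse, ?_, by simpa using hPe⟩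
  rcases hPq with rfl | rfl
  · simpa [← hq'] using hqf
  · simpa [← hq'] using hqf.append [e.2]

def TransversalSemipath (D : DG) (l : List ℕ) : Prop :=
  D.IsSemipath l ∧ 2 ≤ l.length ∧ ∀ e, connEdges D l e → Transversal D e

theorem TransversalSemipath.reverse (hor : D.IsOriented) {l : List ℕ}
    (hl : TransversalSemipath D l) : TransversalSemipath D l.reverse :=
  ⟨hl.1.reverse, by simpa using hl.2.1,
    fun e he => hl.2.2 e ((hl.1.connEdges_reverse hor).mp he)⟩

theorem TransversalSemipath.cons (hor : D.IsOriented) {l : List ℕ} {u w : ℕ}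
    (hl : TransversalSemipath D l) (hw : l.head? = some w) (hu : u ∉ l) (huw : D.semiAdj u w)
    (ht : Transversal D (connEdge D u w)) : TransversalSemipath D (u :: l) := by
  obtain ⟨l, rfl⟩ : ∃ l', l = w :: l' := by
    cases l with
    | nil => cases hw
    | cons a l' => exact ⟨l', by simp_all⟩
  refine ⟨hl.1.cons hor hw huw hu, by simp, fun e he => ?_⟩
  rcases connEdges_cons_cons.mp he with rfl | he
  exacts [ht, hl.2.2 e he]

theorem transversalSemipath_pair (hor : D.IsOriented) {e : ℕ × ℕ}
    (he : Transversal D e) : TransversalSemipath D [e.1, e.2] := by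
  refine ⟨⟨by simp, ?_, by simp [hor.2.1 e he.1], isChain_pair.mpr (Or.inl he.1)⟩, by simp, ?_⟩
  · simpa using hor.1 e he.1
  · intro f hf
    rcases connEdges_cons_cons.mp hf with rfl | hf
    · rwa [connEdge_of_mem he.1]
    · exact absurd hf not_connEdges_singleton

theorem exists_maximal_transversalSemipath (hor : D.IsOriented) {e : ℕ × ℕ}
    (he : Transversal D e) : ∃ l, TransversalSemipath D l ∧
      ∀ l', TransversalSemipath D l' → l'.length ≤ l.length := by
  obtain ⟨l, hl, hmin⟩ := (measure fun l : List ℕ => D.verts.card - l.length).wf.has_min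
    {l | TransversalSemipath D l} ⟨_, transversalSemipath_pair hor he⟩
  refine ⟨l, hl, fun l' hl' => ?_⟩
  have h₁ : ¬ D.verts.card - l'.length < D.verts.card - l.length := hmin l' hl'
  have h₂ := hl'.1.length_le_card
  omega

theorem exists_transversal_connEdge_leaving (hor : D.IsOriented)
    (hac : D.Asemicyclic) (hconn : D.WeaklyConnected) {l : List ℕ}
    (hl : TransversalSemipath D l) {f : ℕ × ℕ} (hf : Transversal D f)
    (hfl : ¬ connEdges D l f) :
    ∃ u w, u ∉ l ∧ w ∈ l ∧ D.semiAdj u w ∧ Transversal D (connEdge D u w) := by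
  by_cases h₁ : f.1 ∈ l <;> by_cases h₂ : f.2 ∈ l
  · refine absurd ?_ hfl
    simpa [connEdge_of_mem hf.1] using hac.connEdges_of_semiAdj hor hl.1 h₁ h₂ (Or.inl hf.1)
  · exact ⟨f.2, f.1, h₂, h₁, Or.inr hf.1, by rwa [hor.connEdge_snd_fst hf.1]⟩
  · exact ⟨f.1, f.2, h₁, h₂, Or.inl hf.1, by rwa [connEdge_of_mem hf.1]⟩
  · obtain ⟨x, y, t, rfl⟩ := exists_eq_cons_cons_of_two_le_length hl.2.1
    have hxy : connEdges D (x :: y :: t) (connEdge D x y) := connEdges_cons_cons.mpr (Or.inl rfl)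
    obtain ⟨P, hP, hPf, hPe⟩ :=
      exists_semipath_isFirstConnEdge hor hac hconn (hl.1.mem_edges_of_connEdges hxy) hf.1
    have hPt : ∀ g, connEdges D P g → Transversal D g :=
      fun g => transversal_of_connEdges hac hP hPf hPe hf (hl.2.2 _ hxy)
    obtain ⟨a, b, P, rfl, hab⟩ := hPf
    have ha : a ∉ x :: y :: t := by
      rcases hab ▸ left_eq_or_of_connEdge D a b with rfl | rfl <;> assumption
    obtain ⟨c, d, P', hcP, hcd⟩ := hPe
    have hcl : c ∈ x :: y :: t := by rcases eq_or_eq_of_connEdge_eq hcd with rfl | rfl <;> simp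
    have hc : c ∈ b :: P := by
      have := mem_reverse.mp (hcP ▸ mem_cons_self : c ∈ (a :: b :: P).reverse)
      exact (mem_cons.mp this).resolve_left (by rintro rfl; exact ha hcl)
    obtain ⟨s, u, w, r, hdec, hu, hw⟩ :=
      exists_eq_cons_append_cons_cons (S := (· ∈ x :: y :: t)) ha ⟨c, hc, hcl⟩
    exact ⟨u, w, hu, hw, hP.semiAdj_of_eq_append hdec,
      hPt _ (hdec ▸ connEdges_append_cons_cons D s r u w)⟩

theorem connEdges_of_transversal_of_maximal (hK : IsKGraph D) {l : List ℕ}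
    (hl : TransversalSemipath D l)
    (hmax : ∀ l', TransversalSemipath D l' → l'.length ≤ l.length) {f : ℕ × ℕ}
    (hf : Transversal D f) : connEdges D l f := by
  obtain ⟨hor, hconn, hac, -, -, hbif⟩ := hK
  by_contra hfl
  obtain ⟨u, w, hu, hw, huw, ht⟩ := exists_transversal_connEdge_leaving hor hac hconn hl hf hfl
  by_cases hh : l.head? = some w
  · simpa using hmax _ (hl.cons hor hh hu huw ht)
  by_cases hlast : l.getLast? = some w
  · simpa using
      hmax _ ((hl.reverse hor).cons hor (by simpa using hlast) (by simpa using hu) huw ht)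
  obtain ⟨s, a, b, r, rfl⟩ := exists_eq_append_cons_cons_cons_of_mem hw hh hlast
  have haw : connEdges D (s ++ a :: w :: b :: r) (connEdge D a w) :=
    connEdges_append_cons_cons D s (b :: r) a w
  have hwb : connEdges D (s ++ a :: w :: b :: r) (connEdge D w b) := by
    simpa using connEdges_append_cons_cons D (s ++ [a]) r w b
  have hnd : [a, w, b].Nodup := (hl.1.infix ⟨s, r, by simp⟩ (by simp)).2.2.1
  simp only [nodup_cons, mem_cons, not_mem_nil, or_false, not_or] at hnd
  refine hbif _ _ _ ⟨connEdge_mem huw, hl.1.mem_edges_of_connEdges haw,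
    hl.1.mem_edges_of_connEdges hwb, fun h => ?_, fun h => ?_, fun h => ?_, w,
    right_eq_or_of_connEdge D u w, right_eq_or_of_connEdge D a w,
    left_eq_or_of_connEdge D w b⟩ ⟨ht, hl.2.2 _ haw, hl.2.2 _ hwb⟩
  · exact hu (by rcases eq_or_eq_of_connEdge_eq h with rfl | rfl <;> simp)
  · exact hu (by rcases eq_or_eq_of_connEdge_eq h with rfl | rfl <;> simp)
  · rcases eq_or_eq_of_connEdge_eq h with h | h
    exacts [hnd.1.1 h, hnd.1.2 h]

theorem eq_connEdge_of_connEdges_cons_cons {a b : ℕ} {t : List ℕ}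
    (hl : (a :: b :: t).Nodup) {e : ℕ × ℕ} (he : connEdges D (a :: b :: t) e)
    (hae : a = e.1 ∨ a = e.2) : e = connEdge D a b := by
  rcases connEdges_cons_cons.mp he with rfl | he
  · rfl
  · exact absurd (he.mem hae) (nodup_cons.mp hl).1

theorem head?_eq_or_getLast?_eq_of_connEdges_iff {l : List ℕ} {a b : ℕ}
    {t : List ℕ} (hl : D.IsSemipath l) (hl' : (a :: b :: t).Nodup)
    (h : ∀ e, connEdges D (a :: b :: t) e ↔ connEdges D l e) :
    l.head? = some a ∨ l.getLast? = some a := by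
  have ha : a ∈ l :=
    ((h _).mp (connEdges_cons_cons.mpr (Or.inl rfl))).mem (left_eq_or_of_connEdge D a b)
  by_contra hne
  obtain ⟨hh, hlast⟩ := not_or.mp hne
  obtain ⟨s, c, d, r, rfl⟩ := exists_eq_append_cons_cons_cons_of_mem ha hh hlast
  have hca := eq_connEdge_of_connEdges_cons_cons hl'
    ((h _).mpr (connEdges_append_cons_cons D s (d :: r) c a)) (right_eq_or_of_connEdge D c a)
  have had := eq_connEdge_of_connEdges_cons_cons hl'
    ((h _).mpr (by simpa using connEdges_append_cons_cons D (s ++ [c]) r a d))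
    (left_eq_or_of_connEdge D a d)
  have hnd : [c, a, d].Nodup := (hl.infix ⟨s, r, by simp⟩ (by simp)).2.2.1
  simp only [nodup_cons, mem_cons, not_mem_nil, or_false, not_or] at hnd
  rcases eq_or_eq_of_connEdge_eq (hca.trans had.symm) with h | h
  exacts [hnd.1.1 h, hnd.1.2 h]

theorem eq_or_eq_reverse_of_connEdges_iff (hor : D.IsOriented) (hac : D.Asemicyclic)
    {l l' : List ℕ} (hl : D.IsSemipath l) (hl' : D.IsSemipath l') (hlen : 2 ≤ l.length)
    (h : ∀ e, connEdges D l' e ↔ connEdges D l e) : l' = l ∨ l' = l.reverse := by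
  obtain ⟨x, y, t, rfl⟩ := exists_eq_cons_cons_of_two_le_length hlen
  have hlen' := ((h _).mpr (connEdges_cons_cons.mpr (Or.inl rfl))).two_le_length
  obtain ⟨a, b, t', rfl⟩ := exists_eq_cons_cons_of_two_le_length hlen'
  obtain ⟨z, c, t'', hrev⟩ := exists_eq_cons_cons_of_two_le_length
    (by simp : 2 ≤ (a :: b :: t').reverse.length)
  have ha := head?_eq_or_getLast?_eq_of_connEdges_iff hl hl'.2.2.1 h
  have hz := head?_eq_or_getLast?_eq_of_connEdges_iff hl (hrev ▸ hl'.reverse.2.2.1)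
    fun e => by rw [← hrev, hl'.connEdges_reverse hor]; exact h e
  have hlast : (a :: b :: t').getLast? = some z := by rw [← head?_reverse, hrev]; rfl
  have haz : a ≠ z := by
    rintro rfl
    exact (nodup_cons.mp hl'.2.2.1).1 (mem_of_getLast? (by rwa [getLast?_cons_cons] at hlast))
  rcases ha with ha | ha <;> rcases hz with hz | hz
  · exact absurd (Option.some_injective _ (ha.symm.trans hz)) haz
  · exact Or.inl (hac.eq_of_head?_eq_of_getLast?_eq hl' hl ha.symm (hlast.trans hz.symm))
  · refine Or.inr (reverse_eq_iff.mp ?_)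
    exact hac.eq_of_head?_eq_of_getLast?_eq hl'.reverse hl (by rw [head?_reverse, hlast, hz])
      (by rw [getLast?_reverse, ha]; rfl)
  · exact absurd (Option.some_injective _ (ha.symm.trans hz)) haz

/-- If a K-graph `D` has a transversal edge, then there is a semipath of
length at least 2 whose connecting edges are exactly the transversal edges of
`D`, and this semipath is unique up to reversal. -/
theorem transversal_semipath (D : DG) (hK : IsKGraph D)
    (h : ∃ e, Transversal D e) :
    ∃ l : List ℕ, D.IsSemipath l ∧ 2 ≤ l.length ∧
      (∀ e, connEdges D l e ↔ Transversal D e) ∧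
      ∀ l' : List ℕ, D.IsSemipath l' →
        (∀ e, connEdges D l' e ↔ Transversal D e) →
        l' = l ∨ l' = l.reverse := by
  obtain ⟨e, he⟩ := h
  obtain ⟨l, hl, hmax⟩ := exists_maximal_transversalSemipath hK.1 he
  have hl_iff : ∀ e, connEdges D l e ↔ Transversal D e :=
    fun e => ⟨hl.2.2 e, connEdges_of_transversal_of_maximal hK hl hmax⟩
  refine ⟨l, hl.1, hl.2.1, hl_iff, fun l' hl' h' => ?_⟩
  exact eq_or_eq_reverse_of_connEdges_iff hK.1 hK.2.2.1 hl.1 hl' hl.2.1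
    fun e => (h' e).trans (hl_iff e).symm

end PluralCuts
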